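/- Let K be a number field and let A be an integral domain containing K as a subfield (so A is an integral K-algebra with K → A injective) such that A is finitely generated as a K-algebra and A is integrally closed in its fraction field F. Let L be the set of all elements of F that are algebraic over K. Then L is an intermediate field of the extension F/K, the extension L/K is finite (L is a finite-dimensional K-vector space), and L is contained in the image of A under the canonical embedding A → F. -/

import Mathlib

/-- **Lemma 3.4 (algebraic core).**  Let `K` be a number field and `A` an integral
domain containing `K`, finitely generated as a `K`-algebra and integrally closed in
its fraction field `F`.  Then the relative algebraic closure `L` of `K` in `F` is an
intermediate field of `F/K`, is finite over `K`, and is contained in the image of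
`A` in `F`. -/
theorem stmt_5 (K : Type*) [Field K] [NumberField K]
    (A : Type*) [CommRing A] [IsDomain A] [Algebra K A] [Algebra.FiniteType K A]
    [IsIntegrallyClosed A]
    (F : Type*) [Field F] [Algebra A F] [IsFractionRing A F]
    [Algebra K F] [IsScalarTower K A F] :
    ∃ L : IntermediateField K F,
      (L : Set F) = {x : F | IsAlgebraic K x} ∧
      FiniteDimensional K L ∧
      (L : Set F) ⊆ Set.range (algebraMap A F) := by
  have hinj : Function.Injective (algebraMap A F) := IsFractionRing.injective A F
  set L : IntermediateField K F := algebraicClosure K F with hL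
  have hsub : (L : Set F) ⊆ Set.range (algebraMap A F) := by
    intro x hx
    have hK : IsIntegral K x := mem_algebraicClosure_iff'.1 hx
    have hA : IsIntegral A x := hK.tower_top
    obtain ⟨y, hy⟩ := IsIntegrallyClosed.isIntegral_iff.mp hA
    exact ⟨y, hy⟩
  refine ⟨L, ?_, ?_, hsub⟩
  · ext x
    simpa using mem_algebraicClosure_iff (F := K) (E := F) (x := x)
  · -- embed L into A, then into A ⧸ m for a maximal ideal m
    have pre : ∀ x : L, ∃ y : A, algebraMap A F y = (x : F) := fun x => hsub x.2
    let f0 : L → A := fun x => (pre x).choose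
    have hf0 : ∀ x : L, algebraMap A F (f0 x) = (x : F) := fun x => (pre x).choose_spec
    have key : ∀ (x : L) (a : A), algebraMap A F a = (x : F) → f0 x = a := by
      intro x a h
      exact hinj (by rw [hf0, h])
    let f : L →ₐ[K] A :=
      { toFun := f0
        map_one' := key 1 1 (by simp)
        map_mul' := fun x y => key (x * y) (f0 x * f0 y) (by
          simp [map_mul, hf0])
        map_zero' := key 0 0 (by simp)
        map_add' := fun x y => key (x + y) (f0 x + f0 y) (by
          simp [map_add, hf0])
        commutes' := fun k => key (algebraMap K L k) (algebraMap K A k) (by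
          rw [← IsScalarTower.algebraMap_apply K A F]
          rw [IsScalarTower.algebraMap_apply K L F]; rfl) }
    obtain ⟨m, hm⟩ := Ideal.exists_maximal A
    haveI := hm
    letI : Field (A ⧸ m) := Ideal.Quotient.field m
    haveI : Algebra.FiniteType K (A ⧸ m) :=
      Algebra.FiniteType.of_surjective
        (Ideal.Quotient.mkₐ K m) (Ideal.Quotient.mkₐ_surjective K m)
    haveI : Module.Finite K (A ⧸ m) := finite_of_finite_type_of_isJacobsonRing K (A ⧸ m)
    haveI : FiniteDimensional K (A ⧸ m) := ‹Module.Finite K (A ⧸ m)›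
    let g : L →ₐ[K] A ⧸ m := (Ideal.Quotient.mkₐ K m).comp f
    have hg : Function.Injective g := g.toRingHom.injective
    exact FiniteDimensional.of_injective g.toLinearMap hg
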